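/- Let a₀,…,a_{n-1} be nonnegative reals with ∑_{j=0}^{n-1} a_j = L > 0, and A_j = [[1 + a_j², a_j], [a_j, 1]]. Then the product Π = A_{n-1}···A_0 satisfies det(Π) = 1 and tr(Π) ≥ 2 + L², so Π - I is invertible. -/

import Mathlib

/-!
Each factor `!![1 + a², a; a, 1]` has determinant `1` and nonnegative entries, and
multiplying by it on the left raises the off-diagonal entries of the running product by at
least `a` and its trace from `2 + s²` to at least `2 + (s + a)²`, where `s` is the sum of the
parameters so far. Hence `det Π = 1` and `tr Π ≥ 2 + L²`, so `det (Π - 1) = 2 - tr Π ≤ -L² < 0`.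
-/

open Matrix

def transferMatrix (x : ℝ) : Matrix (Fin 2) (Fin 2) ℝ := !![1 + x ^ 2, x; x, 1]

theorem det_transferMatrix (x : ℝ) : (transferMatrix x).det = 1 := by
  rw [transferMatrix, det_fin_two_of]; ring

theorem det_sub_one_fin_two {R : Type*} [CommRing R] (M : Matrix (Fin 2) (Fin 2) R) :
    (M - 1).det = M.det - M.trace + 1 := by
  simp [det_fin_two, trace_fin_two]
  ring

structure TransferBounds (s : ℝ) (P : Matrix (Fin 2) (Fin 2) ℝ) : Prop where
  nonneg : 0 ≤ s
  one_le_apply_zero_zero : 1 ≤ P 0 0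
  one_le_apply_one_one : 1 ≤ P 1 1
  le_apply_zero_one : s ≤ P 0 1
  le_apply_one_zero : s ≤ P 1 0
  trace_ge : 2 + s ^ 2 ≤ P.trace

theorem transferBounds_one : TransferBounds 0 (1 : Matrix (Fin 2) (Fin 2) ℝ) := by
  constructor <;> norm_num [trace_fin_two]

theorem transferMatrix_mul (x : ℝ) (P : Matrix (Fin 2) (Fin 2) ℝ) :
    transferMatrix x * P =
      !![(1 + x ^ 2) * P 0 0 + x * P 1 0, (1 + x ^ 2) * P 0 1 + x * P 1 1;
        x * P 0 0 + P 1 0, x * P 0 1 + P 1 1] := by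
  rw [transferMatrix, eta_fin_two P, mul_fin_two]
  simp

theorem TransferBounds.transferMatrix_mul {s x : ℝ} {P : Matrix (Fin 2) (Fin 2) ℝ}
    (hP : TransferBounds s P) (hx : 0 ≤ x) : TransferBounds (s + x) (transferMatrix x * P) := by
  obtain ⟨hs, h00, h11, h01, h10, htr⟩ := hP
  rw [trace_fin_two] at htr
  rw [_root_.transferMatrix_mul]
  refine ⟨add_nonneg hs hx, ?_, ?_, ?_, ?_, ?_⟩ <;>
    simp only [trace_fin_two, of_apply, cons_val', cons_val_zero, cons_val_one, empty_val',
      cons_val_fin_one] <;>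
    nlinarith [mul_le_mul_of_nonneg_left h01 hx, mul_le_mul_of_nonneg_left h10 hx,
      mul_le_mul_of_nonneg_left h00 (sq_nonneg x)]

theorem det_prod_transferMatrix (l : List ℝ) : (l.map transferMatrix).prod.det = 1 := by
  induction l with
  | nil => exact det_one
  | cons x l ih => rw [List.map_cons, List.prod_cons, det_mul, det_transferMatrix, ih, one_mul]

theorem transferBounds_prod (l : List ℝ) (hl : ∀ x ∈ l, 0 ≤ x) :
    TransferBounds l.sum (l.map transferMatrix).prod := by
  induction l with
  | nil => simpa using transferBounds_one
  | cons x l ih =>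
    rw [List.map_cons, List.prod_cons, List.sum_cons, add_comm x]
    exact (ih fun y hy => hl y (List.mem_cons_of_mem x hy)).transferMatrix_mul
      (hl x List.mem_cons_self)

theorem transfer_product_minus_id_invertible_general (n : ℕ) (L : ℝ) (hL : 0 < L)
    (a : ℕ → ℝ) (ha : ∀ j, 0 ≤ a j) (hsum : ∑ j ∈ Finset.range n, a j = L) :
    let P : Matrix (Fin 2) (Fin 2) ℝ := ((List.range n).reverse.map
        (fun j => (!![1 + (a j) ^ 2, a j; a j, 1] : Matrix (Fin 2) (Fin 2) ℝ))).prod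
    P.det = 1 ∧ Matrix.trace P ≥ 2 + L ^ 2 ∧ IsUnit (P - 1) := by
  intro P
  have hP : P = (((List.range n).reverse.map a).map transferMatrix).prod := by
    simp [P, transferMatrix, Function.comp_def]
  have hsum_list : ((List.range n).reverse.map a).sum = L := by
    rw [← hsum, List.map_reverse, List.sum_reverse, Finset.sum_eq_multiset_sum,
      Finset.range_val, Multiset.range, Multiset.map_coe, Multiset.sum_coe]
  have hdet : P.det = 1 := hP ▸ det_prod_transferMatrix _
  have hbounds := transferBounds_prod ((List.range n).reverse.map a) (by simp [ha])
  have htrace : 2 + L ^ 2 ≤ P.trace := hP ▸ hsum_list ▸ hbounds.trace_ge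
  refine ⟨hdet, htrace, ?_⟩
  rw [isUnit_iff_isUnit_det, isUnit_iff_ne_zero, det_sub_one_fin_two, hdet]
  have hneg : 1 - P.trace + 1 < 0 := by linarith [pow_pos hL 2]
  exact hneg.ne

theorem transfer_product_minus_id_invertible (n : ℕ) (hn : 1 ≤ n) (L : ℝ) (hL : 0 < L)
    (a : ℕ → ℝ) (ha : ∀ j, 0 ≤ a j) (hsum : ∑ j ∈ Finset.range n, a j = L) :
    let P : Matrix (Fin 2) (Fin 2) ℝ := ((List.range n).reverse.map
        (fun j => (!![1 + (a j) ^ 2, a j; a j, 1] : Matrix (Fin 2) (Fin 2) ℝ))).prod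
    P.det = 1 ∧ Matrix.trace P ≥ 2 + L ^ 2 ∧ IsUnit (P - 1) :=
  transfer_product_minus_id_invertible_general n L hL a ha hsum
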